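/- In the N-layer cascade network, let 1 ≤ n ≤ N and let ℳ = ∏_{j=1}^M z_j be a monomial appearing in s_{n−1,L_{n−1}}^{(ℓ_0)} but in no lower-order derivative of s_{n−1,L_{n−1}}, involving only variables of species among {S_{k,j}, F_k : 1 ≤ k ≤ n−1} ∪ {E}. Assume that (i) ℳ is square-free and does not contain two disjoint pairs of variables corresponding to species that react together, and (ii) if s_{n−1,L_{n−1}} divides ℳ, then for every pair of indices j_1, j_2 with Z_{j_1} reacting with Z_{j_2}, one of Z_{j_1}, Z_{j_2} equals S_{n−1,L_{n−1}}. Then ℳ̂ := s_{n,L_n−1}·ℳ appears in s_{n,L_n}^{(ℓ_0+2)} and in no lower-order derivative of s_{n,L_n}; moreover, if C is the coefficient of ℳ in s_{n−1,L_{n−1}}^{(ℓ_0)}, then the coefficient of ℳ̂ in s_{n,L_n}^{(ℓ_0+2)} equals c_{n,L_n} a_{n,L_n} C. -/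

import Mathlib

/-!
Weigh each species by `ω ∈ [0, 1]`, with weight `1` on the intermediates and `ω x + ω y ≥ 1`
whenever `x` reacts with `y`. Every monomial of every right-hand side then has weight `≥ 1`, so
a total derivative never lowers the weight of a monomial (`∂/∂x` removes weight `ω x ≤ 1`, the
factor `ẋ` adds at least `1`).

The hypotheses on `ℳ` say that the reaction graph on the variables of
`ℳ̂ = s_{n,L_n-1} ℳ` has no two disjoint edges; it is a star or a triangle, so it has a fractional
vertex cover of total weight `< 2`, equal to `1` at `s_{n-1,L_{n-1}}` when that variable divides
`ℳ`. Extended by `1` to all other species, this makes `ℳ̂` lighter than any monomial coming from a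
product of two species of weight `1`. Hence `ℳ̂` reaches `s_{n,L_n}` only along
`s_{n,L_n} ← u_{n,L_n} ← s_{n-1,L_{n-1}} s_{n,L_n-1}`, one derivative and one factor
`c_{n,L_n}`, resp. `a_{n,L_n}`, per step; and in `(s_{n-1,L_{n-1}} s_{n,L_n-1})^{(m)}` the
coefficient of `ℳ̂` is that of `ℳ` in `s_{n-1,L_{n-1}}^{(m)}`, all other Leibniz terms being too
heavy.
-/

open MvPolynomial Finsupp

variable {σ : Type*}

/-- The total (Lie) derivative of a polynomial `φ` associated to the polynomial vector
field `f`: `φ̇ = Σ_x (∂φ/∂x)·f x`. -/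
noncomputable def lieD [Fintype σ] (f : σ → MvPolynomial σ ℝ)
    (φ : MvPolynomial σ ℝ) : MvPolynomial σ ℝ :=
  ∑ x : σ, MvPolynomial.pderiv x φ * f x

/-- Iterated total (Lie) derivative. -/
noncomputable def lieDIter [Fintype σ] (f : σ → MvPolynomial σ ℝ) :
    ℕ → MvPolynomial σ ℝ → MvPolynomial σ ℝ
  | 0, φ => φ
  | n + 1, φ => lieD f (lieDIter f n φ)

/-- Indicator of a species inside a complex, as a real number. -/
def ind [DecidableEq σ] (a x : σ) : ℝ := if a = x then 1 else 0

/-- The `N`-layer cascade network. Setting `S_{0,L_0} := E`, layer `m` (`1 ≤ m ≤ N`)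
consists of the two connected components
`S_{m-1,L_{m-1}} + S_{m,0} ⇄ U_{m,1} → ⋯ ⇄ U_{m,L_m} → S_{m-1,L_{m-1}} + S_{m,L_m}`
(rate constants `a_{m,j}, b_{m,j}, c_{m,j}`, encoded as indices `0,1,2`) and
`F_m + S_{m,L_m} ⇄ V_{m,L_m} → ⋯ ⇄ V_{m,1} → F_m + S_{m,0}`
(rate constants `ã_{m,j}, b̃_{m,j}, c̃_{m,j}`, encoded as indices `3,4,5`).
All the species `E`, `F m`, `S m j`, `U m j`, `V m j` (in the relevant index ranges)
are pairwise distinct. -/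
structure Cascade (σ : Type*) where
  N : ℕ
  Npos : 1 ≤ N
  L : ℕ → ℕ
  Lpos : ∀ m, 1 ≤ m → m ≤ N → 1 ≤ L m
  E : σ
  F : ℕ → σ
  S : ℕ → ℕ → σ
  U : ℕ → ℕ → σ
  V : ℕ → ℕ → σ
  hEF : ∀ m, 1 ≤ m → m ≤ N → E ≠ F m
  hES : ∀ m j, 1 ≤ m → m ≤ N → j ≤ L m → E ≠ S m j
  hEU : ∀ m j, 1 ≤ m → m ≤ N → 1 ≤ j → j ≤ L m → E ≠ U m j
  hEV : ∀ m j, 1 ≤ m → m ≤ N → 1 ≤ j → j ≤ L m → E ≠ V m j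
  hFinj : ∀ m m', 1 ≤ m → m ≤ N → 1 ≤ m' → m' ≤ N → F m = F m' → m = m'
  hFS : ∀ m m' j', 1 ≤ m → m ≤ N → 1 ≤ m' → m' ≤ N → j' ≤ L m' → F m ≠ S m' j'
  hFU : ∀ m m' j', 1 ≤ m → m ≤ N → 1 ≤ m' → m' ≤ N → 1 ≤ j' → j' ≤ L m' → F m ≠ U m' j'
  hFV : ∀ m m' j', 1 ≤ m → m ≤ N → 1 ≤ m' → m' ≤ N → 1 ≤ j' → j' ≤ L m' → F m ≠ V m' j'
  hSinj : ∀ m j m' j', 1 ≤ m → m ≤ N → j ≤ L m → 1 ≤ m' → m' ≤ N → j' ≤ L m' →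
    S m j = S m' j' → m = m' ∧ j = j'
  hSU : ∀ m j m' j', 1 ≤ m → m ≤ N → j ≤ L m → 1 ≤ m' → m' ≤ N → 1 ≤ j' → j' ≤ L m' →
    S m j ≠ U m' j'
  hSV : ∀ m j m' j', 1 ≤ m → m ≤ N → j ≤ L m → 1 ≤ m' → m' ≤ N → 1 ≤ j' → j' ≤ L m' →
    S m j ≠ V m' j'
  hUinj : ∀ m j m' j', 1 ≤ m → m ≤ N → 1 ≤ j → j ≤ L m → 1 ≤ m' → m' ≤ N → 1 ≤ j' →
    j' ≤ L m' → U m j = U m' j' → m = m' ∧ j = j'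
  hUV : ∀ m j m' j', 1 ≤ m → m ≤ N → 1 ≤ j → j ≤ L m → 1 ≤ m' → m' ≤ N → 1 ≤ j' →
    j' ≤ L m' → U m j ≠ V m' j'
  hVinj : ∀ m j m' j', 1 ≤ m → m ≤ N → 1 ≤ j → j ≤ L m → 1 ≤ m' → m' ≤ N → 1 ≤ j' →
    j' ≤ L m' → V m j = V m' j' → m = m' ∧ j = j'

namespace Cascade

variable [Fintype σ] [DecidableEq σ]

/-- The species `S_{m, L_m}`, with the convention `S_{0, L_0} := E`; `act (m-1)` is the
enzyme acting on the first component of layer `m`. -/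
def act (c : Cascade σ) (m : ℕ) : σ := if m = 0 then c.E else c.S m (c.L m)

/-- The mass-action right-hand side of the cascade system; `k m j t` is the rate constant
of layer `m`, block `j`, with `t = 0,…,5` for `a_{m,j}, b_{m,j}, c_{m,j}, ã_{m,j},
b̃_{m,j}, c̃_{m,j}`. -/
noncomputable def rhs (c : Cascade σ) (k : ℕ → ℕ → Fin 6 → ℝ) (x : σ) :
    MvPolynomial σ ℝ :=
  ∑ m ∈ Finset.Icc 1 c.N, ∑ j ∈ Finset.Icc 1 (c.L m),
    (C (k m j 0 * (ind (c.U m j) x - ind (c.act (m - 1)) x - ind (c.S m (j - 1)) x)) *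
        (X (c.act (m - 1)) * X (c.S m (j - 1)))
      + C (k m j 1 * (ind (c.act (m - 1)) x + ind (c.S m (j - 1)) x - ind (c.U m j) x)) *
        X (c.U m j)
      + C (k m j 2 * (ind (c.act (m - 1)) x + ind (c.S m j) x - ind (c.U m j) x)) *
        X (c.U m j)
      + C (k m j 3 * (ind (c.V m j) x - ind (c.F m) x - ind (c.S m j) x)) *
        (X (c.F m) * X (c.S m j))
      + C (k m j 4 * (ind (c.F m) x + ind (c.S m j) x - ind (c.V m j) x)) *
        X (c.V m j)
      + C (k m j 5 * (ind (c.F m) x + ind (c.S m (j - 1)) x - ind (c.V m j) x)) *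
        X (c.V m j))

/-- `x^{(ℓ)}(x, k)`: the `ℓ`-th iterated total derivative of the variable `x` along the
cascade mass-action system. -/
noncomputable def deriv (c : Cascade σ) (k : ℕ → ℕ → Fin 6 → ℝ) (ℓ : ℕ) (x : σ) :
    MvPolynomial σ ℝ :=
  lieDIter (c.rhs k) ℓ (X x)

/-- The non-intermediate `x₁` reacts with the non-intermediate `x₂` in the cascade. -/
def reactsWith (c : Cascade σ) (x₁ x₂ : σ) : Prop :=
  ∃ m j, 1 ≤ m ∧ m ≤ c.N ∧ 1 ≤ j ∧ j ≤ c.L m ∧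
    ((x₁ = c.act (m - 1) ∧ x₂ = c.S m (j - 1)) ∨
     (x₂ = c.act (m - 1) ∧ x₁ = c.S m (j - 1)) ∨
     (x₁ = c.F m ∧ x₂ = c.S m j) ∨ (x₂ = c.F m ∧ x₁ = c.S m j))

/-- The exponent vector `𝒫 = ∏_{i=m+1}^n s_{i, L_i - 1}`. -/
noncomputable def PP (c : Cascade σ) (n m : ℕ) : σ →₀ ℕ :=
  ∑ i ∈ Finset.Icc (m + 1) n, Finsupp.single (c.S i (c.L i - 1)) 1

/-- The constant `𝒞 = ∏_{i=m+1}^n c_{i, L_i} a_{i, L_i}`. -/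
def CC (c : Cascade σ) (k : ℕ → ℕ → Fin 6 → ℝ) (n m : ℕ) : ℝ :=
  ∏ i ∈ Finset.Icc (m + 1) n, (k i (c.L i) 2 * k i (c.L i) 0)

/-- The constant `𝒦 = Σ_{i=m+1}^n K_{i, L_i}`. -/
def KK (c : Cascade σ) (k : ℕ → ℕ → Fin 6 → ℝ) (n m : ℕ) : ℝ :=
  ∑ i ∈ Finset.Icc (m + 1) n, (k i (c.L i) 1 + k i (c.L i) 2)

end Cascade

theorem linear_recurrence_eq_zero_of_forcing_eq_zero {β γ : ℕ → ℝ} {a K : ℝ} {ℓ₀ : ℕ}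
    (h0 : β 0 = 0) (hsucc : ∀ q, β (q + 1) = a * γ q - K * β q) (hγ : ∀ q < ℓ₀, γ q = 0) :
    (∀ q ≤ ℓ₀, β q = 0) ∧ β (ℓ₀ + 1) = a * γ ℓ₀ := by
  have hβ : ∀ q ≤ ℓ₀, β q = 0 := by
    intro q hq
    induction q with
    | zero => exact h0
    | succ q ih => rw [hsucc, ih (by omega), hγ q (by omega)]; ring
  exact ⟨hβ, by rw [hsucc, hβ ℓ₀ le_rfl]; ring⟩

section LieDerivative

variable [Fintype σ] (f : σ → MvPolynomial σ ℝ)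

theorem lieD_eq_mkDerivation : lieD f = mkDerivation ℝ f := by
  have hD : (∑ x, f x • pderiv x : Derivation ℝ (MvPolynomial σ ℝ) (MvPolynomial σ ℝ)) =
      mkDerivation ℝ f := by
    classical
    refine derivation_ext fun i => ?_
    rw [← Derivation.coeFnAddMonoidHom_apply, map_sum, Finset.sum_apply]
    simp [Derivation.coeFnAddMonoidHom_apply, pderiv_X, Pi.single_apply]
  funext φ
  rw [← hD, lieD, ← Derivation.coeFnAddMonoidHom_apply, map_sum, Finset.sum_apply]
  simp [Derivation.coeFnAddMonoidHom_apply, mul_comm]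

theorem lieD_X (y : σ) : lieD f (X y) = f y := by
  rw [lieD_eq_mkDerivation, mkDerivation_X]

theorem lieDIter_eq_pow (ℓ : ℕ) (φ : MvPolynomial σ ℝ) :
    lieDIter f ℓ φ = ((mkDerivation ℝ f : MvPolynomial σ ℝ →ₗ[ℝ] MvPolynomial σ ℝ) ^ ℓ) φ := by
  induction ℓ with
  | zero => rfl
  | succ ℓ ih =>
    rw [pow_succ', Module.End.mul_apply, ← ih]
    exact congrFun (lieD_eq_mkDerivation f) _

theorem lieDIter_succ_X (ℓ : ℕ) (y : σ) : lieDIter f (ℓ + 1) (X y) = lieDIter f ℓ (f y) := by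
  rw [lieDIter_eq_pow, lieDIter_eq_pow, pow_succ, Module.End.mul_apply]
  simp [mkDerivation_X]

theorem lieDIter_add (ℓ : ℕ) (p q : MvPolynomial σ ℝ) :
    lieDIter f ℓ (p + q) = lieDIter f ℓ p + lieDIter f ℓ q := by
  simp only [lieDIter_eq_pow, map_add]

theorem lieDIter_C_mul (ℓ : ℕ) (r : ℝ) (p : MvPolynomial σ ℝ) :
    lieDIter f ℓ (C r * p) = C r * lieDIter f ℓ p := by
  simp only [lieDIter_eq_pow, C_mul', map_smul]

theorem lieDIter_apply_zero (ℓ : ℕ) : lieDIter f ℓ 0 = 0 := by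
  simp only [lieDIter_eq_pow, map_zero]

theorem lieDIter_sum {ι : Type*} (ℓ : ℕ) (s : Finset ι) (g : ι → MvPolynomial σ ℝ) :
    lieDIter f ℓ (∑ i ∈ s, g i) = ∑ i ∈ s, lieDIter f ℓ (g i) := by
  simp only [lieDIter_eq_pow, map_sum]

theorem exists_of_coeff_lieD_ne_zero {φ : MvPolynomial σ ℝ} {ν : σ →₀ ℕ}
    (h : coeff ν (lieD f φ) ≠ 0) :
    ∃ μ ρ x, coeff μ φ ≠ 0 ∧ coeff ρ (f x) ≠ 0 ∧ ν + single x 1 = μ + ρ := by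
  classical
  rw [lieD, coeff_sum] at h
  obtain ⟨x, -, hx⟩ := Finset.exists_ne_zero_of_sum_ne_zero h
  rw [coeff_mul] at hx
  obtain ⟨⟨μ, ρ⟩, hμρ, hne⟩ := Finset.exists_ne_zero_of_sum_ne_zero hx
  rw [Finset.HasAntidiagonal.mem_antidiagonal] at hμρ
  rw [coeff_pderiv] at hne
  exact ⟨μ + single x 1, ρ, x, left_ne_zero_of_mul (left_ne_zero_of_mul hne),
    right_ne_zero_of_mul hne, by rw [← hμρ, add_right_comm]⟩

end LieDerivative

section Weight

variable {f : σ → MvPolynomial σ ℝ} {ω : σ → ℝ}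

structure IsAdmissibleWeight (f : σ → MvPolynomial σ ℝ) (ω : σ → ℝ) : Prop where
  le_one : ∀ x, ω x ≤ 1
  one_le_weight : ∀ x ρ, coeff ρ (f x) ≠ 0 → 1 ≤ weight ω ρ

theorem weight_single_one (ω : σ → ℝ) (x : σ) : weight ω (single x 1) = ω x := by
  simp [weight_single]

theorem weight_sum_single_one (ω : σ → ℝ) (s : Finset σ) :
    weight ω (∑ x ∈ s, single x 1) = ∑ x ∈ s, ω x := by
  simp [weight_single]

theorem sum_single_one_apply [DecidableEq σ] (s : Finset σ) (y : σ) :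
    (∑ x ∈ s, single x 1 : σ →₀ ℕ) y = if y ∈ s then 1 else 0 := by
  rw [Finsupp.finsetSum_apply]
  simp [Finsupp.single_apply]

theorem eq_add_of_coeff_mul_ne_zero {p q : MvPolynomial σ ℝ} {ν : σ →₀ ℕ}
    (h : coeff ν (p * q) ≠ 0) : ∃ μ ρ, coeff μ p ≠ 0 ∧ coeff ρ q ≠ 0 ∧ ν = μ + ρ := by
  classical
  obtain ⟨μ, hμ, ρ, hρ, rfl⟩ :=
    Finset.mem_add.mp (MvPolynomial.support_mul p q (MvPolynomial.mem_support_iff.mpr h))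
  exact ⟨μ, ρ, MvPolynomial.mem_support_iff.mp hμ, MvPolynomial.mem_support_iff.mp hρ, rfl⟩

theorem eq_single_of_coeff_X_ne_zero {ν : σ →₀ ℕ} {a : σ}
    (h : coeff ν (X a : MvPolynomial σ ℝ) ≠ 0) : ν = single a 1 := by
  classical
  rw [coeff_X] at h
  exact (ite_ne_right_iff.mp h).1.symm

theorem coeff_X_eq_zero_of_apply_ne_zero {ν : σ →₀ ℕ} {x y : σ} (hν : ν x ≠ 0)
    (hxy : x ≠ y) : coeff ν (X y : MvPolynomial σ ℝ) = 0 := by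
  classical
  by_contra h
  rw [eq_single_of_coeff_X_ne_zero h, single_apply, if_neg hxy.symm] at hν
  exact hν rfl

theorem weight_add_single_eq (ω : σ → ℝ) {μ ρ ν : σ →₀ ℕ} {x : σ}
    (h : ν + single x 1 = μ + ρ) : weight ω ν + ω x = weight ω μ + weight ω ρ := by
  simpa [weight_single_one] using congrArg (weight ω) h

def HeavyAt (ω : σ → ℝ) (a : σ) (μ : σ →₀ ℕ) : Prop :=
  2 ≤ weight ω μ ∨ (μ a ≠ 0 ∧ 1 + ω a ≤ weight ω μ)

namespace IsAdmissibleWeight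

variable [Fintype σ]

theorem le_weight_lieD (hω : IsAdmissibleWeight f ω) {t : ℝ} {φ : MvPolynomial σ ℝ}
    (hφ : ∀ μ, coeff μ φ ≠ 0 → t ≤ weight ω μ) {ν : σ →₀ ℕ} (h : coeff ν (lieD f φ) ≠ 0) :
    t ≤ weight ω ν := by
  obtain ⟨μ, ρ, x, hμ, hρ, hadd⟩ := exists_of_coeff_lieD_ne_zero f h
  linarith [weight_add_single_eq ω hadd, hφ μ hμ, hω.one_le_weight x ρ hρ, hω.le_one x]

theorem le_weight_lieDIter (hω : IsAdmissibleWeight f ω) {t : ℝ} {φ : MvPolynomial σ ℝ}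
    (hφ : ∀ μ, coeff μ φ ≠ 0 → t ≤ weight ω μ) (ℓ : ℕ) :
    ∀ ν, coeff ν (lieDIter f ℓ φ) ≠ 0 → t ≤ weight ω ν := by
  induction ℓ with
  | zero => exact hφ
  | succ ℓ ih => exact fun ν => hω.le_weight_lieD ih

theorem coeff_lieDIter_eq_zero (hω : IsAdmissibleWeight f ω) {t : ℝ} {φ : MvPolynomial σ ℝ}
    (hφ : ∀ μ, coeff μ φ ≠ 0 → t ≤ weight ω μ) {ν : σ →₀ ℕ} (hν : weight ω ν < t) (ℓ : ℕ) :
    coeff ν (lieDIter f ℓ φ) = 0 := by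
  by_contra h
  exact (hω.le_weight_lieDIter hφ ℓ ν h).not_gt hν

theorem coeff_lieDIter_X_mul_X_eq_zero (hω : IsAdmissibleWeight f ω) {a b : σ} (ha : ω a = 1)
    (hb : ω b = 1) {ν : σ →₀ ℕ} (hν : weight ω ν < 2) (ℓ : ℕ) :
    coeff ν (lieDIter f ℓ (X a * X b)) = 0 := by
  refine hω.coeff_lieDIter_eq_zero (fun μ hμ => ?_) hν ℓ
  obtain ⟨μa, μb, hμa, hμb, rfl⟩ := eq_add_of_coeff_mul_ne_zero hμ
  rw [eq_single_of_coeff_X_ne_zero hμa, eq_single_of_coeff_X_ne_zero hμb, map_add,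
    weight_single_one, weight_single_one, ha, hb]
  norm_num

theorem heavyAt_lieD (hω : IsAdmissibleWeight f ω) {a : σ} {φ : MvPolynomial σ ℝ}
    (hφ : ∀ μ, coeff μ φ ≠ 0 → HeavyAt ω a μ) {ν : σ →₀ ℕ} (h : coeff ν (lieD f φ) ≠ 0) :
    HeavyAt ω a ν := by
  classical
  obtain ⟨μ, ρ, x, hμ, hρ, hadd⟩ := exists_of_coeff_lieD_ne_zero f h
  have hw := weight_add_single_eq ω hadd
  have hρ1 := hω.one_le_weight x ρ hρ
  have hx1 := hω.le_one x
  rcases hφ μ hμ with h2 | ⟨hμa, hle⟩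
  · exact Or.inl (by linarith)
  · by_cases hxa : x = a
    · subst hxa
      exact Or.inl (by linarith)
    · refine Or.inr ⟨?_, by linarith⟩
      have hνa : (ν + single x 1 : σ →₀ ℕ) a = (μ + ρ : σ →₀ ℕ) a := by rw [hadd]
      simp only [Finsupp.add_apply, Finsupp.single_apply, if_neg hxa] at hνa
      omega

theorem heavyAt_lieDIter_X_mul (hω : IsAdmissibleWeight f ω) {a b : σ} (m : ℕ)
    {ν : σ →₀ ℕ} (h : coeff ν (lieDIter f m (X a) * f b) ≠ 0) : HeavyAt ω a ν := by
  obtain ⟨μ, ρ, hμ, hρ, rfl⟩ := eq_add_of_coeff_mul_ne_zero h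
  have hρ1 := hω.one_le_weight b ρ hρ
  cases m with
  | zero =>
    rw [eq_single_of_coeff_X_ne_zero hμ]
    refine Or.inr ⟨by simp, ?_⟩
    rw [map_add, weight_single_one]
    linarith
  | succ m =>
    rw [lieDIter_succ_X] at hμ
    have hμ1 := hω.le_weight_lieDIter (hω.one_le_weight a) m μ hμ
    exact Or.inl (by rw [map_add]; linarith)

/-- In the Leibniz expansion, the terms other than `x_a^{(m)} x_b` are `x_a^{(m-i)} x_b^{(i)}`
with `i ≥ 1`: the second factor has weight `≥ 1`, and so has the first unless `i = m`, when it is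
`x_a` itself. -/
theorem exists_lieDIter_X_mul_X (hω : IsAdmissibleWeight f ω) (a b : σ) (m : ℕ) :
    ∃ R, lieDIter f m (X a * X b) = lieDIter f m (X a) * X b + R ∧
      ∀ μ, coeff μ R ≠ 0 → HeavyAt ω a μ := by
  induction m with
  | zero => exact ⟨0, (add_zero _).symm, fun μ h => (h (coeff_zero μ)).elim⟩
  | succ m ih =>
    obtain ⟨R, hR, hRheavy⟩ := ih
    refine ⟨lieDIter f m (X a) * f b + lieD f R, ?_, fun μ hμ => ?_⟩
    · change lieD f (lieDIter f m (X a * X b)) = lieD f (lieDIter f m (X a)) * X b + _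
      rw [hR, lieD_eq_mkDerivation, map_add, Derivation.leibniz, mkDerivation_X, smul_eq_mul,
        smul_eq_mul]
      ring
    · rw [coeff_add] at hμ
      by_cases h1 : coeff μ (lieDIter f m (X a) * f b) = 0
      · rw [h1, zero_add] at hμ
        exact hω.heavyAt_lieD hRheavy hμ
      · exact hω.heavyAt_lieDIter_X_mul m h1

theorem coeff_lieDIter_X_mul_X (hω : IsAdmissibleWeight f ω) {a b : σ} {ν : σ →₀ ℕ}
    (hν : ¬ HeavyAt ω a (ν + single b 1)) (m : ℕ) :
    coeff (ν + single b 1) (lieDIter f m (X a * X b)) = coeff ν (lieDIter f m (X a)) := by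
  obtain ⟨R, hR, hRheavy⟩ := hω.exists_lieDIter_X_mul_X a b m
  rw [hR, coeff_add, coeff_mul_X, not_ne_iff.mp (mt (hRheavy _) hν), add_zero]

end IsAdmissibleWeight

end Weight

section FractionalCover

variable {α : Type*} (r : α → α → Prop)

def IsFractionalCover (Z : Finset α) (ω : α → ℝ) : Prop :=
  (∀ x, 0 ≤ ω x ∧ ω x ≤ 1) ∧ ∀ a ∈ Z, ∀ b ∈ Z, r a b → 1 ≤ ω a + ω b

def EdgesPairwiseMeet (Z : Finset α) : Prop :=
  ∀ a ∈ Z, ∀ b ∈ Z, ∀ c ∈ Z, ∀ d ∈ Z, r a b → r c d → a = c ∨ a = d ∨ b = c ∨ b = d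

variable {r} {Z : Finset α}

theorem isFractionalCover_indicator [DecidableEq α] {e : α}
    (he : ∀ a ∈ Z, ∀ b ∈ Z, r a b → a = e ∨ b = e) :
    IsFractionalCover r Z (fun x => if x = e then 1 else 0) := by
  refine ⟨fun x => by dsimp only; split_ifs <;> norm_num, fun a _ b _ hab => ?_⟩
  rcases he a ‹_› b ‹_› hab with rfl | rfl <;> dsimp only <;> split_ifs <;> simp_all

theorem sum_indicator_le_one [DecidableEq α] (Z : Finset α) (e : α) :
    ∑ x ∈ Z, (if x = e then (1 : ℝ) else 0) ≤ 1 := by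
  rw [Finset.sum_ite_eq']
  split_ifs <;> norm_num

namespace EdgesPairwiseMeet

theorem exists_adj_of_avoid [Std.Symm r] (hZ : EdgesPairwiseMeet r Z) {x y a b : α}
    (hx : x ∈ Z) (hy : y ∈ Z) (hxy : r x y) (ha : a ∈ Z) (hb : b ∈ Z) (hab : r a b)
    (hax : a ≠ x) (hbx : b ≠ x) : y ≠ x ∧ ∃ w ∈ Z, r y w ∧ w ≠ x := by
  rcases hZ a ha b hb x hx y hy hab hxy with h | rfl | h | rfl
  · exact absurd h hax
  · exact ⟨hax, b, hb, hab, hbx⟩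
  · exact absurd h hbx
  · exact ⟨hbx, a, ha, Std.Symm.symm _ _ hab, hax⟩

/-- Without two disjoint edges the graph is a star, covered by its centre, or a triangle, covered
by weight `1 / 2` on its vertices. -/
theorem exists_isFractionalCover_sum_lt_two [DecidableEq α] [Std.Symm r]
    (hZ : EdgesPairwiseMeet r Z) :
    ∃ ω, IsFractionalCover r Z ω ∧ ∑ x ∈ Z, ω x < 2 := by
  by_cases hstar : ∃ e, ∀ a ∈ Z, ∀ b ∈ Z, r a b → a = e ∨ b = e
  · obtain ⟨e, he⟩ := hstar
    exact ⟨_, isFractionalCover_indicator he, (sum_indicator_le_one Z e).trans_lt one_lt_two⟩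
  by_cases hedge : ∃ x ∈ Z, ∃ y ∈ Z, r x y
  swap
  · push Not at hedge
    exact ⟨fun _ => 0, ⟨fun _ => by norm_num, fun a ha b hb hab => absurd hab (hedge a ha b hb)⟩,
      by simp⟩
  obtain ⟨x, hx, y, hy, hxy⟩ := hedge
  push Not at hstar
  obtain ⟨a, ha, b, hb, hab, hax, hbx⟩ := hstar x
  obtain ⟨hyx, w, hw, hyw, hwx⟩ := hZ.exists_adj_of_avoid hx hy hxy ha hb hab hax hbx
  obtain ⟨a', ha', b', hb', hab', hay', hby'⟩ := hstar y
  obtain ⟨-, w', hw', hxw', hwy'⟩ :=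
    hZ.exists_adj_of_avoid hy hx (Std.Symm.symm _ _ hxy) ha' hb' hab' hay' hby'
  obtain rfl : w = w' := by
    rcases hZ y hy w hw x hx w' hw' hyw hxw' with h | h | h | h
    exacts [absurd h hyx, absurd h.symm hwy', absurd h hwx, h]
  refine ⟨fun v => if v ∈ ({x, y, w} : Finset α) then 1 / 2 else 0,
    ⟨fun v => by dsimp only; split_ifs <;> norm_num, fun c hc d hd hcd => ?_⟩, ?_⟩
  · have h1 := hZ c hc d hd x hx y hy hcd hxy
    have h2 := hZ c hc d hd y hy w hw hcd hyw
    have h3 := hZ c hc d hd x hx w hw hcd hxw'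
    have hT : c ∈ ({x, y, w} : Finset α) ∧ d ∈ ({x, y, w} : Finset α) := by
      simp only [Finset.mem_insert, Finset.mem_singleton]
      grind
    dsimp only
    rw [if_pos hT.1, if_pos hT.2]
    norm_num
  · rw [Finset.sum_ite_mem, Finset.sum_const, nsmul_eq_mul]
    have hcard : ((Z ∩ {x, y, w}).card : ℝ) ≤ 3 := by
      exact_mod_cast (Finset.card_le_card Finset.inter_subset_right).trans Finset.card_le_three
    linarith

end EdgesPairwiseMeet

theorem edgesPairwiseMeet_image [DecidableEq α] {ι : Type*} [Fintype ι] {z : ι → α}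
    (hirr : ∀ x, ¬ r x x)
    (h : ¬ ∃ j₁ j₂ j₃ j₄ : ι, j₁ ≠ j₂ ∧ j₁ ≠ j₃ ∧ j₁ ≠ j₄ ∧ j₂ ≠ j₃ ∧ j₂ ≠ j₄ ∧ j₃ ≠ j₄ ∧
      r (z j₁) (z j₂) ∧ r (z j₃) (z j₄)) :
    EdgesPairwiseMeet r (Finset.univ.image z) := by
  simp only [EdgesPairwiseMeet, Finset.mem_image, Finset.mem_univ, true_and,
    forall_exists_index, forall_apply_eq_imp_iff]
  intro j₁ j₂ j₃ j₄ h₁₂ h₃₄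
  by_contra hne
  push Not at hne
  have hloop : ∀ {i i'}, r (z i) (z i') → i ≠ i' := fun hr hi => hirr _ (hi ▸ hr)
  exact h ⟨j₁, j₂, j₃, j₄, hloop h₁₂, fun hi => hne.1 (congrArg z hi),
    fun hi => hne.2.1 (congrArg z hi), fun hi => hne.2.2.1 (congrArg z hi),
    fun hi => hne.2.2.2 (congrArg z hi), hloop h₃₄, h₁₂, h₃₄⟩

end FractionalCover

namespace Cascade

section Species

variable (c : Cascade σ)

theorem S_ne_S {m j m' j' : ℕ} (hm1 : 1 ≤ m) (hmN : m ≤ c.N) (hjL : j ≤ c.L m) (hm1' : 1 ≤ m')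
    (hmN' : m' ≤ c.N) (hjL' : j' ≤ c.L m') (h : m ≠ m' ∨ j ≠ j') : c.S m j ≠ c.S m' j' :=
  fun hS => by have := c.hSinj m j m' j' hm1 hmN hjL hm1' hmN' hjL' hS; omega

theorem act_ne_U {m m' j' : ℕ} (hm1 : 1 ≤ m) (hmN : m ≤ c.N) (hm1' : 1 ≤ m') (hmN' : m' ≤ c.N)
    (hj1 : 1 ≤ j') (hjL : j' ≤ c.L m') : c.act (m - 1) ≠ c.U m' j' := by
  unfold act
  split_ifs
  · exact c.hEU m' j' hm1' hmN' hj1 hjL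
  · exact c.hSU _ _ m' j' (by omega) (by omega) le_rfl hm1' hmN' hj1 hjL

theorem act_ne_V {m m' j' : ℕ} (hm1 : 1 ≤ m) (hmN : m ≤ c.N) (hm1' : 1 ≤ m') (hmN' : m' ≤ c.N)
    (hj1 : 1 ≤ j') (hjL : j' ≤ c.L m') : c.act (m - 1) ≠ c.V m' j' := by
  unfold act
  split_ifs
  · exact c.hEV m' j' hm1' hmN' hj1 hjL
  · exact c.hSV _ _ m' j' (by omega) (by omega) le_rfl hm1' hmN' hj1 hjL

theorem eq_of_act_eq_S {m m' j' : ℕ} (hm1 : 1 ≤ m) (hmN : m ≤ c.N) (hm1' : 1 ≤ m')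
    (hmN' : m' ≤ c.N) (hjL : j' ≤ c.L m') (h : c.act (m - 1) = c.S m' j') :
    m = m' + 1 ∧ j' = c.L m' := by
  unfold act at h
  split_ifs at h
  · exact absurd h (c.hES m' j' hm1' hmN' hjL)
  · obtain ⟨rfl, rfl⟩ := c.hSinj _ _ m' j' (by omega) (by omega) le_rfl hm1' hmN' hjL h
    exact ⟨by omega, rfl⟩

instance : Std.Symm c.reactsWith :=
  ⟨fun _ _ ⟨m, j, h1, h2, h3, h4, h⟩ => ⟨m, j, h1, h2, h3, h4, by tauto⟩⟩

theorem not_reactsWith_self (x : σ) : ¬ c.reactsWith x x := by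
  rintro ⟨m, j, h1, h2, -, h4, ⟨rfl, hx⟩ | ⟨rfl, hx⟩ | ⟨rfl, hx⟩ | ⟨rfl, hx⟩⟩
  · have := c.eq_of_act_eq_S h1 h2 h1 h2 (by omega) hx; omega
  · have := c.eq_of_act_eq_S h1 h2 h1 h2 (by omega) hx; omega
  · exact c.hFS m m j h1 h2 h1 h2 h4 hx
  · exact c.hFS m m j h1 h2 h1 h2 h4 hx

def LowVar (n : ℕ) (x : σ) : Prop :=
  x = c.E ∨ ∃ kk, 1 ≤ kk ∧ kk ≤ n - 1 ∧ (x = c.F kk ∨ ∃ j', j' ≤ c.L kk ∧ x = c.S kk j')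

variable {c}

theorem LowVar.ne_U {n : ℕ} (hnN : n ≤ c.N) {x : σ} (hx : c.LowVar n x) {m j : ℕ}
    (hm1 : 1 ≤ m) (hmN : m ≤ c.N) (hj1 : 1 ≤ j) (hjL : j ≤ c.L m) : x ≠ c.U m j := by
  rcases hx with rfl | ⟨kk, hk1, hk2, rfl | ⟨j', hj', rfl⟩⟩
  · exact c.hEU m j hm1 hmN hj1 hjL
  · exact c.hFU kk m j hk1 (by omega) hm1 hmN hj1 hjL
  · exact c.hSU kk j' m j hk1 (by omega) hj' hm1 hmN hj1 hjL

theorem LowVar.ne_V {n : ℕ} (hnN : n ≤ c.N) {x : σ} (hx : c.LowVar n x) {m j : ℕ}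
    (hm1 : 1 ≤ m) (hmN : m ≤ c.N) (hj1 : 1 ≤ j) (hjL : j ≤ c.L m) : x ≠ c.V m j := by
  rcases hx with rfl | ⟨kk, hk1, hk2, rfl | ⟨j', hj', rfl⟩⟩
  · exact c.hEV m j hm1 hmN hj1 hjL
  · exact c.hFV kk m j hk1 (by omega) hm1 hmN hj1 hjL
  · exact c.hSV kk j' m j hk1 (by omega) hj' hm1 hmN hj1 hjL

theorem LowVar.ne_S {n : ℕ} (hn1 : 1 ≤ n) {x : σ} (hx : c.LowVar n x) {m j : ℕ} (hnm : n ≤ m)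
    (hmN : m ≤ c.N) (hjL : j ≤ c.L m) : x ≠ c.S m j := by
  rcases hx with rfl | ⟨kk, hk1, hk2, rfl | ⟨j', hj', rfl⟩⟩
  · exact c.hES m j (by omega) hmN hjL
  · exact c.hFS kk m j hk1 (by omega) (by omega) hmN hjL
  · exact c.S_ne_S hk1 (by omega) hj' (by omega) hmN hjL (by omega)

theorem LowVar.ne_F {n : ℕ} (hn1 : 1 ≤ n) {x : σ} (hx : c.LowVar n x) {m : ℕ} (hnm : n ≤ m)
    (hmN : m ≤ c.N) : x ≠ c.F m := by
  rcases hx with rfl | ⟨kk, hk1, hk2, rfl | ⟨j', hj', rfl⟩⟩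
  · exact c.hEF m (by omega) hmN
  · exact fun hF => by have := c.hFinj kk m hk1 (by omega) (by omega) hmN hF; omega
  · exact (c.hFS m kk j' (by omega) hmN hk1 (by omega) hj').symm

theorem LowVar.eq_act_of_reactsWith {n : ℕ} (hn1 : 1 ≤ n) (hnN : n ≤ c.N) {y : σ}
    (hy : c.LowVar n y) (h : c.reactsWith (c.S n (c.L n - 1)) y) : y = c.act (n - 1) := by
  have hL := c.Lpos n hn1 hnN
  obtain ⟨m, j, h1, h2, h3, h4, ⟨hS, -⟩ | ⟨rfl, hS⟩ | ⟨hS, -⟩ | ⟨rfl, hS⟩⟩ := h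
  · have := c.eq_of_act_eq_S h1 h2 hn1 hnN (by omega) hS.symm
    omega
  · obtain ⟨rfl, -⟩ := c.hSinj m (j - 1) n (c.L n - 1) h1 h2 (by omega) hn1 hnN (by omega) hS.symm
    rfl
  · exact absurd hS.symm (c.hFS m n (c.L n - 1) h1 h2 hn1 hnN (by omega))
  · obtain ⟨rfl, -⟩ := c.hSinj m j n (c.L n - 1) h1 h2 h4 hn1 hnN (by omega) hS.symm
    exact absurd rfl (hy.ne_F hn1 le_rfl hnN)

end Species

section Rhs

variable [DecidableEq σ] (c : Cascade σ) (k : ℕ → ℕ → Fin 6 → ℝ)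

noncomputable def blockRhs (m j : ℕ) (x : σ) : MvPolynomial σ ℝ :=
  C (k m j 0 * (ind (c.U m j) x - ind (c.act (m - 1)) x - ind (c.S m (j - 1)) x)) *
      (X (c.act (m - 1)) * X (c.S m (j - 1)))
    + C (k m j 1 * (ind (c.act (m - 1)) x + ind (c.S m (j - 1)) x - ind (c.U m j) x)) *
      X (c.U m j)
    + C (k m j 2 * (ind (c.act (m - 1)) x + ind (c.S m j) x - ind (c.U m j) x)) *
      X (c.U m j)
    + C (k m j 3 * (ind (c.V m j) x - ind (c.F m) x - ind (c.S m j) x)) *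
      (X (c.F m) * X (c.S m j))
    + C (k m j 4 * (ind (c.F m) x + ind (c.S m j) x - ind (c.V m j) x)) * X (c.V m j)
    + C (k m j 5 * (ind (c.F m) x + ind (c.S m (j - 1)) x - ind (c.V m j) x)) * X (c.V m j)

theorem rhs_eq_sum_blockRhs (x : σ) :
    c.rhs k x = ∑ m ∈ Finset.Icc 1 c.N, ∑ j ∈ Finset.Icc 1 (c.L m), c.blockRhs k m j x :=
  rfl

variable {c}

theorem blockRhs_eq_zero {m j : ℕ} {x : σ} (hU : c.U m j ≠ x) (hact : c.act (m - 1) ≠ x)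
    (hS' : c.S m (j - 1) ≠ x) (hS : c.S m j ≠ x) (hF : c.F m ≠ x) (hV : c.V m j ≠ x) :
    c.blockRhs k m j x = 0 := by
  simp [blockRhs, ind, hU, hact, hS', hS, hF, hV]

theorem rhs_eq_blockRhs {m j : ℕ} {x : σ} (hm : m ∈ Finset.Icc 1 c.N)
    (hj : j ∈ Finset.Icc 1 (c.L m))
    (h : ∀ m' ∈ Finset.Icc 1 c.N, ∀ j' ∈ Finset.Icc 1 (c.L m'), (m', j') ≠ (m, j) →
      c.blockRhs k m' j' x = 0) :
    c.rhs k x = c.blockRhs k m j x := by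
  rw [rhs_eq_sum_blockRhs, Finset.sum_eq_single_of_mem m hm fun m' hm' hne =>
      Finset.sum_eq_zero fun j' hj' => h m' hm' j' hj' (by simp [hne]),
    Finset.sum_eq_single_of_mem j hj fun j' hj' hne => h m hm j' hj' (by simp [hne])]

theorem rhs_U {m j : ℕ} (hm1 : 1 ≤ m) (hmN : m ≤ c.N) (hj1 : 1 ≤ j) (hjL : j ≤ c.L m) :
    c.rhs k (c.U m j) = C (k m j 0) * (X (c.act (m - 1)) * X (c.S m (j - 1)))
      + C (-(k m j 1 + k m j 2)) * X (c.U m j) := by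
  have hne : ∀ m' ∈ Finset.Icc 1 c.N, ∀ j' ∈ Finset.Icc 1 (c.L m'),
      c.act (m' - 1) ≠ c.U m j ∧ c.S m' (j' - 1) ≠ c.U m j ∧ c.S m' j' ≠ c.U m j ∧
        c.F m' ≠ c.U m j ∧ c.V m' j' ≠ c.U m j := by
    intro m' hm' j' hj'
    rw [Finset.mem_Icc] at hm' hj'
    exact ⟨c.act_ne_U hm'.1 hm'.2 hm1 hmN hj1 hjL,
      c.hSU m' _ m j hm'.1 hm'.2 (by omega) hm1 hmN hj1 hjL,
      c.hSU m' j' m j hm'.1 hm'.2 hj'.2 hm1 hmN hj1 hjL, c.hFU m' m j hm'.1 hm'.2 hm1 hmN hj1 hjL,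
      (c.hUV m j m' j' hm1 hmN hj1 hjL hm'.1 hm'.2 hj'.1 hj'.2).symm⟩
  have hm : m ∈ Finset.Icc 1 c.N := Finset.mem_Icc.mpr ⟨hm1, hmN⟩
  have hj : j ∈ Finset.Icc 1 (c.L m) := Finset.mem_Icc.mpr ⟨hj1, hjL⟩
  rw [rhs_eq_blockRhs k hm hj fun m' hm' j' hj' hmj => ?_]
  · obtain ⟨h1, h2, h3, h4, h5⟩ := hne m hm j hj
    simp only [blockRhs, ind, h1, h2, h3, h4, h5, if_true, if_false]
    simp only [map_sub, map_mul, map_add, map_neg, map_one, map_zero]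
    ring
  · obtain ⟨h1, h2, h3, h4, h5⟩ := hne m' hm' j' hj'
    rw [Finset.mem_Icc] at hm' hj'
    refine blockRhs_eq_zero k (fun hU => hmj ?_) h1 h2 h3 h4 h5
    obtain ⟨rfl, rfl⟩ := c.hUinj m' j' m j hm'.1 hm'.2 hj'.1 hj'.2 hm1 hmN hj1 hjL hU
    rfl

theorem rhs_V {m j : ℕ} (hm1 : 1 ≤ m) (hmN : m ≤ c.N) (hj1 : 1 ≤ j) (hjL : j ≤ c.L m) :
    c.rhs k (c.V m j) = C (k m j 3) * (X (c.F m) * X (c.S m j))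
      + C (-(k m j 4 + k m j 5)) * X (c.V m j) := by
  have hne : ∀ m' ∈ Finset.Icc 1 c.N, ∀ j' ∈ Finset.Icc 1 (c.L m'),
      c.U m' j' ≠ c.V m j ∧ c.act (m' - 1) ≠ c.V m j ∧ c.S m' (j' - 1) ≠ c.V m j ∧
        c.S m' j' ≠ c.V m j ∧ c.F m' ≠ c.V m j := by
    intro m' hm' j' hj'
    rw [Finset.mem_Icc] at hm' hj'
    exact ⟨c.hUV m' j' m j hm'.1 hm'.2 hj'.1 hj'.2 hm1 hmN hj1 hjL,
      c.act_ne_V hm'.1 hm'.2 hm1 hmN hj1 hjL,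
      c.hSV m' _ m j hm'.1 hm'.2 (by omega) hm1 hmN hj1 hjL,
      c.hSV m' j' m j hm'.1 hm'.2 hj'.2 hm1 hmN hj1 hjL, c.hFV m' m j hm'.1 hm'.2 hm1 hmN hj1 hjL⟩
  have hm : m ∈ Finset.Icc 1 c.N := Finset.mem_Icc.mpr ⟨hm1, hmN⟩
  have hj : j ∈ Finset.Icc 1 (c.L m) := Finset.mem_Icc.mpr ⟨hj1, hjL⟩
  rw [rhs_eq_blockRhs k hm hj fun m' hm' j' hj' hmj => ?_]
  · obtain ⟨h1, h2, h3, h4, h5⟩ := hne m hm j hj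
    simp only [blockRhs, ind, h1, h2, h3, h4, h5, if_true, if_false]
    simp only [map_sub, map_mul, map_add, map_neg, map_one, map_zero]
    ring
  · obtain ⟨h1, h2, h3, h4, h5⟩ := hne m' hm' j' hj'
    rw [Finset.mem_Icc] at hm' hj'
    refine blockRhs_eq_zero k h1 h2 h3 h4 h5 (fun hV => hmj ?_)
    obtain ⟨rfl, rfl⟩ := c.hVinj m' j' m j hm'.1 hm'.2 hj'.1 hj'.2 hm1 hmN hj1 hjL hV
    rfl
theorem sum_blockRhs_S_top {n : ℕ} (hn1 : 1 ≤ n) (hnN : n ≤ c.N) :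
    ∑ j ∈ Finset.Icc 1 (c.L n), c.blockRhs k n j (c.S n (c.L n)) =
      C (k n (c.L n) 2) * X (c.U n (c.L n))
        + (C (-(k n (c.L n) 3)) * (X (c.F n) * X (c.S n (c.L n)))
          + C (k n (c.L n) 4) * X (c.V n (c.L n))) := by
  have hL := c.Lpos n hn1 hnN
  have hact : c.act (n - 1) ≠ c.S n (c.L n) :=
    fun hS => by have := c.eq_of_act_eq_S hn1 hnN hn1 hnN le_rfl hS; omega
  have hF : c.F n ≠ c.S n (c.L n) := c.hFS n n _ hn1 hnN hn1 hnN le_rfl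
  rw [Finset.sum_eq_single_of_mem (c.L n) (Finset.mem_Icc.mpr ⟨hL, le_rfl⟩) fun j hj hjL => ?_]
  · have hS' : c.S n (c.L n - 1) ≠ c.S n (c.L n) :=
      c.S_ne_S hn1 hnN (Nat.sub_le _ 1) hn1 hnN le_rfl (Or.inr (by omega))
    simp only [blockRhs, ind, (c.hSU n _ n _ hn1 hnN le_rfl hn1 hnN hL le_rfl).symm, hact, hS', hF,
      (c.hSV n _ n _ hn1 hnN le_rfl hn1 hnN hL le_rfl).symm, if_true, if_false]
    simp only [map_sub, map_mul, map_add, map_neg, map_one, map_zero]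
    ring
  · rw [Finset.mem_Icc] at hj
    exact blockRhs_eq_zero k (c.hSU n _ n j hn1 hnN le_rfl hn1 hnN hj.1 hj.2).symm hact
      (c.S_ne_S hn1 hnN (by omega) hn1 hnN le_rfl (Or.inr (by omega)))
      (c.S_ne_S hn1 hnN hj.2 hn1 hnN le_rfl (Or.inr hjL)) hF
      (c.hSV n _ n j hn1 hnN le_rfl hn1 hnN hj.1 hj.2).symm

theorem blockRhs_succ_S_top {n j : ℕ} (hn1 : 1 ≤ n) (hN1 : n + 1 ≤ c.N) (hj1 : 1 ≤ j)
    (hjL : j ≤ c.L (n + 1)) :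
    c.blockRhs k (n + 1) j (c.S n (c.L n)) =
      C (-(k (n + 1) j 0)) * (X (c.S n (c.L n)) * X (c.S (n + 1) (j - 1)))
        + C (k (n + 1) j 1 + k (n + 1) j 2) * X (c.U (n + 1) j) := by
  have hnN : n ≤ c.N := by omega
  have hact : c.act (n + 1 - 1) = c.S n (c.L n) := by
    rw [Nat.add_sub_cancel, act, if_neg (by omega)]
  have hS' : c.S (n + 1) (j - 1) ≠ c.S n (c.L n) :=
    c.S_ne_S (by omega) hN1 (by omega) hn1 hnN le_rfl (Or.inl (by omega))
  have hS : c.S (n + 1) j ≠ c.S n (c.L n) :=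
    c.S_ne_S (by omega) hN1 hjL hn1 hnN le_rfl (Or.inl (by omega))
  simp only [blockRhs, ind, hact, (c.hSU n _ (n + 1) j hn1 hnN le_rfl (by omega) hN1 hj1 hjL).symm,
    hS', hS, c.hFS (n + 1) n _ (by omega) hN1 hn1 hnN le_rfl,
    (c.hSV n _ (n + 1) j hn1 hnN le_rfl (by omega) hN1 hj1 hjL).symm, if_true, if_false]
  simp only [map_sub, map_mul, map_add, map_neg, map_one, map_zero]
  ring

theorem sum_blockRhs_S_top_of_ne {n m : ℕ} (hn1 : 1 ≤ n) (hnN : n ≤ c.N) (hm1 : 1 ≤ m)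
    (hmN : m ≤ c.N) (hmn : m ≠ n) (hmn' : m ≠ n + 1) :
    ∑ j ∈ Finset.Icc 1 (c.L m), c.blockRhs k m j (c.S n (c.L n)) = 0 := by
  refine Finset.sum_eq_zero fun j hj => ?_
  rw [Finset.mem_Icc] at hj
  exact blockRhs_eq_zero k (c.hSU n _ m j hn1 hnN le_rfl hm1 hmN hj.1 hj.2).symm
    (fun hS => hmn' (c.eq_of_act_eq_S hm1 hmN hn1 hnN le_rfl hS).1)
    (c.S_ne_S hm1 hmN (by omega) hn1 hnN le_rfl (Or.inl hmn))
    (c.S_ne_S hm1 hmN hj.2 hn1 hnN le_rfl (Or.inl hmn)) (c.hFS m n _ hm1 hmN hn1 hnN le_rfl)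
    (c.hSV n _ m j hn1 hnN le_rfl hm1 hmN hj.1 hj.2).symm

theorem rhs_S_top {n : ℕ} (hn1 : 1 ≤ n) (hnN : n ≤ c.N) :
    c.rhs k (c.S n (c.L n)) =
      C (k n (c.L n) 2) * X (c.U n (c.L n))
      + (C (-(k n (c.L n) 3)) * (X (c.F n) * X (c.S n (c.L n)))
        + C (k n (c.L n) 4) * X (c.V n (c.L n))
        + (if n + 1 ≤ c.N then
            ∑ j ∈ Finset.Icc 1 (c.L (n + 1)),
              (C (-(k (n + 1) j 0)) * (X (c.S n (c.L n)) * X (c.S (n + 1) (j - 1)))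
                + C (k (n + 1) j 1 + k (n + 1) j 2) * X (c.U (n + 1) j))
          else 0)) := by
  have hother : ∀ m ∈ Finset.Icc 1 c.N, m ≠ n → m ≠ n + 1 →
      ∑ j ∈ Finset.Icc 1 (c.L m), c.blockRhs k m j (c.S n (c.L n)) = 0 := fun m hm =>
    sum_blockRhs_S_top_of_ne k hn1 hnN (Finset.mem_Icc.mp hm).1 (Finset.mem_Icc.mp hm).2
  rw [rhs_eq_sum_blockRhs]
  split_ifs with hN1
  · rw [Finset.sum_eq_add_of_mem n (n + 1) (Finset.mem_Icc.mpr ⟨hn1, hnN⟩)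
      (Finset.mem_Icc.mpr ⟨by omega, hN1⟩) (by omega) fun m hm hmn => hother m hm hmn.1 hmn.2,
      sum_blockRhs_S_top k hn1 hnN, Finset.sum_congr rfl fun j hj =>
        blockRhs_succ_S_top k hn1 hN1 (Finset.mem_Icc.mp hj).1 (Finset.mem_Icc.mp hj).2]
    ring
  · rw [Finset.sum_eq_single_of_mem n (Finset.mem_Icc.mpr ⟨hn1, hnN⟩) fun m hm hmn =>
      hother m hm hmn (by rw [Finset.mem_Icc] at hm; omega), sum_blockRhs_S_top k hn1 hnN, add_zero]

end Rhs

section SeparatingWeight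

variable [DecidableEq σ] {c : Cascade σ} (k : ℕ → ℕ → Fin 6 → ℝ)

theorem isAdmissibleWeight_rhs {ω : σ → ℝ} (hω1 : ∀ x, ω x ≤ 1)
    (hUV : ∀ m j, 1 ≤ m → m ≤ c.N → 1 ≤ j → j ≤ c.L m → ω (c.U m j) = 1 ∧ ω (c.V m j) = 1)
    (hreact : ∀ x y, c.reactsWith x y → 1 ≤ ω x + ω y) : IsAdmissibleWeight (c.rhs k) ω := by
  refine ⟨hω1, fun x ρ h => ?_⟩
  rw [rhs_eq_sum_blockRhs, coeff_sum] at h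
  obtain ⟨m, hm, h⟩ := Finset.exists_ne_zero_of_sum_ne_zero h
  rw [coeff_sum] at h
  obtain ⟨j, hj, h⟩ := Finset.exists_ne_zero_of_sum_ne_zero h
  rw [Finset.mem_Icc] at hm hj
  obtain ⟨hU, hV⟩ := hUV m j hm.1 hm.2 hj.1 hj.2
  have hE := hreact _ _ ⟨m, j, hm.1, hm.2, hj.1, hj.2, Or.inl ⟨rfl, rfl⟩⟩
  have hF := hreact _ _ ⟨m, j, hm.1, hm.2, hj.1, hj.2, Or.inr (Or.inr (Or.inl ⟨rfl, rfl⟩))⟩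
  by_contra hlt
  have hpair : ∀ a b, 1 ≤ ω a + ω b → ∀ r : ℝ, coeff ρ (C r * (X a * X b)) = 0 := by
    intro a b hab r
    by_contra hne
    rw [coeff_C_mul] at hne
    obtain ⟨μa, μb, ha, hb, rfl⟩ := eq_add_of_coeff_mul_ne_zero (right_ne_zero_of_mul hne)
    rw [eq_single_of_coeff_X_ne_zero ha, eq_single_of_coeff_X_ne_zero hb, map_add,
      weight_single_one, weight_single_one] at hlt
    exact hlt hab
  have hsingle : ∀ a, ω a = 1 → ∀ r : ℝ, coeff ρ (C r * X a) = 0 := by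
    intro a ha r
    by_contra hne
    rw [coeff_C_mul] at hne
    rw [eq_single_of_coeff_X_ne_zero (right_ne_zero_of_mul hne), weight_single_one, ha] at hlt
    exact hlt le_rfl
  simp only [blockRhs, coeff_add, hpair _ _ hE, hpair _ _ hF, hsingle _ hU, hsingle _ hV,
    add_zero] at h
  exact h rfl

/-- Under `ω` the monomial `s_{n,L_n-1} ∏_{x ∈ Z} x` is too light to be produced in the
derivatives of `s_{n,L_n}` other than along `s_{n,L_n} ← u_{n,L_n} ← act (n - 1) · s_{n,L_n-1}`. -/
structure IsSeparatingWeight (n : ℕ) (Z : Finset σ) (ω : σ → ℝ) : Prop where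
  admissible : IsAdmissibleWeight (c.rhs k) ω
  eq_one : ∀ x ∉ insert (c.S n (c.L n - 1)) Z, ω x = 1
  sum_lt_two : ∑ x ∈ insert (c.S n (c.L n - 1)) Z, ω x < 2
  act_eq_one : c.act (n - 1) ∈ Z → ω (c.act (n - 1)) = 1

theorem exists_isFractionalCover_insert {n : ℕ} (hn1 : 1 ≤ n) (hnN : n ≤ c.N) {Z : Finset σ}
    (hZ : ∀ x ∈ Z, c.LowVar n x) (hmeet : EdgesPairwiseMeet c.reactsWith Z)
    (hdvd : c.act (n - 1) ∈ Z → ∀ a ∈ Z, ∀ b ∈ Z, c.reactsWith a b →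
      a = c.act (n - 1) ∨ b = c.act (n - 1)) :
    ∃ ω, IsFractionalCover c.reactsWith (insert (c.S n (c.L n - 1)) Z) ω ∧
      ∑ x ∈ insert (c.S n (c.L n - 1)) Z, ω x < 2 ∧
      (c.act (n - 1) ∈ Z → ω (c.act (n - 1)) = 1) := by
  have hpartner : ∀ y ∈ insert (c.S n (c.L n - 1)) Z, c.reactsWith (c.S n (c.L n - 1)) y →
      y ∈ Z ∧ y = c.act (n - 1) := by
    intro y hy hr
    rcases Finset.mem_insert.mp hy with rfl | hy
    · exact absurd hr (c.not_reactsWith_self _)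
    · exact ⟨hy, (hZ y hy).eq_act_of_reactsWith hn1 hnN hr⟩
  by_cases heZ : c.act (n - 1) ∈ Z
  · refine ⟨fun x => if x = c.act (n - 1) then 1 else 0, isFractionalCover_indicator ?_,
      (sum_indicator_le_one _ _).trans_lt one_lt_two, fun _ => if_pos rfl⟩
    intro a ha b hb hab
    rcases Finset.mem_insert.mp ha with rfl | ha
    · exact Or.inr (hpartner b hb hab).2
    rcases Finset.mem_insert.mp hb with rfl | hb
    · exact Or.inl (hpartner a (Finset.mem_insert_of_mem ha) (Std.Symm.symm _ _ hab)).2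
    exact hdvd heZ a ha b hb hab
  · have hin : ∀ a ∈ insert (c.S n (c.L n - 1)) Z, ∀ b ∈ insert (c.S n (c.L n - 1)) Z,
        c.reactsWith a b → a ∈ Z ∧ b ∈ Z := by
      intro a ha b hb hab
      rcases Finset.mem_insert.mp ha with rfl | ha
      · obtain ⟨hbZ, rfl⟩ := hpartner b hb hab
        exact absurd hbZ heZ
      rcases Finset.mem_insert.mp hb with rfl | hb
      · obtain ⟨haZ, rfl⟩ := hpartner a (Finset.mem_insert_of_mem ha) (Std.Symm.symm _ _ hab)
        exact absurd haZ heZ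
      exact ⟨ha, hb⟩
    have hmeet' : EdgesPairwiseMeet c.reactsWith (insert (c.S n (c.L n - 1)) Z) :=
      fun a ha b hb a' ha' b' hb' hab hab' =>
        hmeet a (hin a ha b hb hab).1 b (hin a ha b hb hab).2 a' (hin a' ha' b' hb' hab').1 b'
          (hin a' ha' b' hb' hab').2 hab hab'
    obtain ⟨ω, hω, hsum⟩ := hmeet'.exists_isFractionalCover_sum_lt_two
    exact ⟨ω, hω, hsum, fun h => absurd h heZ⟩

theorem exists_isSeparatingWeight {n : ℕ} (hn1 : 1 ≤ n) (hnN : n ≤ c.N) {Z : Finset σ}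
    (hZ : ∀ x ∈ Z, c.LowVar n x) (hmeet : EdgesPairwiseMeet c.reactsWith Z)
    (hdvd : c.act (n - 1) ∈ Z → ∀ a ∈ Z, ∀ b ∈ Z, c.reactsWith a b →
      a = c.act (n - 1) ∨ b = c.act (n - 1)) :
    ∃ ω, c.IsSeparatingWeight k n Z ω := by
  obtain ⟨ω, ⟨hω01, hcover⟩, hsum, hact⟩ := exists_isFractionalCover_insert hn1 hnN hZ hmeet hdvd
  set Z' := insert (c.S n (c.L n - 1)) Z
  have hnot : ∀ x, (∀ y ∈ Z, y ≠ x) → x ≠ c.S n (c.L n - 1) → x ∉ Z' := by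
    intro x hZx hx hx'
    rcases Finset.mem_insert.mp hx' with h | h
    exacts [hx h, hZx x h rfl]
  refine ⟨fun x => if x ∈ Z' then ω x else 1, ⟨isAdmissibleWeight_rhs k ?_ ?_ ?_, ?_, ?_, ?_⟩⟩
  · intro x
    split_ifs
    exacts [(hω01 x).2, le_rfl]
  · intro m j hm1 hmN hj1 hjL
    rw [if_neg (hnot _ (fun y hy => (hZ y hy).ne_U hnN hm1 hmN hj1 hjL)
        (c.hSU n _ m j hn1 hnN (Nat.sub_le _ 1) hm1 hmN hj1 hjL).symm),
      if_neg (hnot _ (fun y hy => (hZ y hy).ne_V hnN hm1 hmN hj1 hjL)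
        (c.hSV n _ m j hn1 hnN (Nat.sub_le _ 1) hm1 hmN hj1 hjL).symm)]
    exact ⟨rfl, rfl⟩
  · intro x y hxy
    split_ifs with hx hy hy
    · exact hcover x hx y hy hxy
    · linarith [(hω01 x).1]
    · linarith [(hω01 y).1]
    · norm_num
  · exact fun x hx => if_neg hx
  · rwa [Finset.sum_congr rfl fun x hx => if_pos hx]
  · intro he
    rw [if_pos (Finset.mem_insert_of_mem he), hact he]

end SeparatingWeight

section Derivatives

variable [Fintype σ] [DecidableEq σ] {c : Cascade σ} (k : ℕ → ℕ → Fin 6 → ℝ)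

theorem coeff_deriv_succ_U {m j : ℕ} (hm1 : 1 ≤ m) (hmN : m ≤ c.N) (hj1 : 1 ≤ j)
    (hjL : j ≤ c.L m) (ν : σ →₀ ℕ) (q : ℕ) :
    coeff ν (c.deriv k (q + 1) (c.U m j)) =
      k m j 0 * coeff ν (lieDIter (c.rhs k) q (X (c.act (m - 1)) * X (c.S m (j - 1))))
        - (k m j 1 + k m j 2) * coeff ν (c.deriv k q (c.U m j)) := by
  rw [deriv, deriv, lieDIter_succ_X, rhs_U k hm1 hmN hj1 hjL, lieDIter_add, lieDIter_C_mul,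
    lieDIter_C_mul, coeff_add, coeff_C_mul, coeff_C_mul]
  ring

theorem coeff_deriv_U_eq_zero {m j : ℕ} (hm1 : 1 ≤ m) (hmN : m ≤ c.N) (hj1 : 1 ≤ j)
    (hjL : j ≤ c.L m) {ν : σ →₀ ℕ} (h0 : coeff ν (X (c.U m j) : MvPolynomial σ ℝ) = 0)
    (hprod : ∀ q, coeff ν (lieDIter (c.rhs k) q (X (c.act (m - 1)) * X (c.S m (j - 1)))) = 0)
    (q : ℕ) : coeff ν (c.deriv k q (c.U m j)) = 0 := by
  induction q with
  | zero => exact h0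
  | succ q ih => rw [coeff_deriv_succ_U k hm1 hmN hj1 hjL, hprod, ih]; ring

theorem coeff_deriv_V_eq_zero {m j : ℕ} (hm1 : 1 ≤ m) (hmN : m ≤ c.N) (hj1 : 1 ≤ j)
    (hjL : j ≤ c.L m) {ν : σ →₀ ℕ} (h0 : coeff ν (X (c.V m j) : MvPolynomial σ ℝ) = 0)
    (hprod : ∀ q, coeff ν (lieDIter (c.rhs k) q (X (c.F m) * X (c.S m j))) = 0)
    (q : ℕ) : coeff ν (c.deriv k q (c.V m j)) = 0 := by
  induction q with
  | zero => exact h0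
  | succ q ih =>
    rw [deriv, lieDIter_succ_X, rhs_V k hm1 hmN hj1 hjL, lieDIter_add, lieDIter_C_mul,
      lieDIter_C_mul, coeff_add, coeff_C_mul, coeff_C_mul, hprod, ← deriv, ih]
    ring

theorem coeff_deriv_succ_S_top {n : ℕ} (hn1 : 1 ≤ n) (hnN : n ≤ c.N) {ν : σ →₀ ℕ}
    (hFS : ∀ q, coeff ν (lieDIter (c.rhs k) q (X (c.F n) * X (c.S n (c.L n)))) = 0)
    (hV : ∀ q, coeff ν (c.deriv k q (c.V n (c.L n))) = 0)
    (hnext : n + 1 ≤ c.N → ∀ j ∈ Finset.Icc 1 (c.L (n + 1)),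
      (∀ q, coeff ν (lieDIter (c.rhs k) q (X (c.S n (c.L n)) * X (c.S (n + 1) (j - 1)))) = 0) ∧
        ∀ q, coeff ν (c.deriv k q (c.U (n + 1) j)) = 0)
    (q : ℕ) :
    coeff ν (c.deriv k (q + 1) (c.S n (c.L n))) =
      k n (c.L n) 2 * coeff ν (c.deriv k q (c.U n (c.L n))) := by
  have hV' := hV q
  rw [deriv] at hV'
  rw [deriv, deriv, lieDIter_succ_X, rhs_S_top k hn1 hnN]
  simp only [lieDIter_add, lieDIter_C_mul, coeff_add, coeff_C_mul, hFS, hV']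
  split_ifs with hN1
  · rw [lieDIter_sum, coeff_sum, Finset.sum_eq_zero fun j hj => ?_]
    · ring
    obtain ⟨hprod, hU⟩ := hnext hN1 j hj
    have hU' := hU q
    rw [deriv] at hU'
    simp only [lieDIter_add, lieDIter_C_mul, coeff_add, coeff_C_mul, hprod, hU']
    ring
  · rw [lieDIter_apply_zero, coeff_zero]
    ring

end Derivatives

namespace IsSeparatingWeight

variable [DecidableEq σ] {c : Cascade σ} {k : ℕ → ℕ → Fin 6 → ℝ} {n : ℕ}
  {Z : Finset σ} {ω : σ → ℝ}

theorem weight_lt_two (hω : c.IsSeparatingWeight k n Z ω) :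
    weight ω (∑ x ∈ insert (c.S n (c.L n - 1)) Z, single x 1) < 2 := by
  rw [weight_sum_single_one]
  exact hω.sum_lt_two

theorem coeff_deriv_succ_U_top [Fintype σ] (hω : c.IsSeparatingWeight k n Z ω) (hn1 : 1 ≤ n)
    (hnN : n ≤ c.N) (hZ : ∀ x ∈ Z, c.LowVar n x) (q : ℕ) :
    coeff (∑ x ∈ insert (c.S n (c.L n - 1)) Z, single x 1) (c.deriv k (q + 1) (c.U n (c.L n))) =
      k n (c.L n) 0 * coeff (∑ x ∈ Z, single x 1) (c.deriv k q (c.act (n - 1)))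
        - (k n (c.L n) 1 + k n (c.L n) 2) *
          coeff (∑ x ∈ insert (c.S n (c.L n - 1)) Z, single x 1) (c.deriv k q (c.U n (c.L n))) := by
  have hL := c.Lpos n hn1 hnN
  have hsL1 : c.S n (c.L n - 1) ∉ Z := fun h => (hZ _ h).ne_S hn1 le_rfl hnN (Nat.sub_le _ 1) rfl
  have hsplit : ∑ x ∈ insert (c.S n (c.L n - 1)) Z, single x 1 =
      (∑ x ∈ Z, single x 1) + single (c.S n (c.L n - 1)) 1 := by
    rw [Finset.sum_insert hsL1, add_comm]
  have hlight : ¬ HeavyAt ω (c.act (n - 1)) (∑ x ∈ insert (c.S n (c.L n - 1)) Z, single x 1) := by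
    rintro (h2 | ⟨he, hle⟩)
    · exact h2.not_gt hω.weight_lt_two
    · rw [sum_single_one_apply, ite_ne_right_iff, Finset.mem_insert] at he
      have heZ : c.act (n - 1) ∈ Z := he.1.resolve_left fun hS => by
        have := c.eq_of_act_eq_S hn1 hnN hn1 hnN (Nat.sub_le _ 1) hS; omega
      linarith [hω.act_eq_one heZ, hω.weight_lt_two]
  rw [coeff_deriv_succ_U k hn1 hnN hL le_rfl, hsplit,
    hω.admissible.coeff_lieDIter_X_mul_X (hsplit ▸ hlight)]
  rfl

theorem coeff_deriv_succ_S_top [Fintype σ] (hω : c.IsSeparatingWeight k n Z ω) (hn1 : 1 ≤ n)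
    (hnN : n ≤ c.N) (hZ : ∀ x ∈ Z, c.LowVar n x) (q : ℕ) :
    coeff (∑ x ∈ insert (c.S n (c.L n - 1)) Z, single x 1) (c.deriv k (q + 1) (c.S n (c.L n))) =
      k n (c.L n) 2 *
        coeff (∑ x ∈ insert (c.S n (c.L n - 1)) Z, single x 1) (c.deriv k q (c.U n (c.L n))) := by
  have hL := c.Lpos n hn1 hnN
  have hone : ∀ x, (∀ y ∈ Z, y ≠ x) → x ≠ c.S n (c.L n - 1) → ω x = 1 := by
    refine fun x hZx hx => hω.eq_one x fun hx' => ?_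
    rcases Finset.mem_insert.mp hx' with h | h
    exacts [hx h, hZx x h rfl]
  have hsL1 : (∑ x ∈ insert (c.S n (c.L n - 1)) Z, single x 1) (c.S n (c.L n - 1)) ≠ 0 := by
    simp [sum_single_one_apply]
  have hprod : ∀ a b, ω a = 1 → ω b = 1 → ∀ q, coeff (∑ x ∈ insert (c.S n (c.L n - 1)) Z,
      single x 1) (lieDIter (c.rhs k) q (X a * X b)) = 0 :=
    fun a b ha hb => hω.admissible.coeff_lieDIter_X_mul_X_eq_zero ha hb hω.weight_lt_two
  have hs : ω (c.S n (c.L n)) = 1 :=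
    hone _ (fun y hy => (hZ y hy).ne_S hn1 le_rfl hnN le_rfl)
      (c.S_ne_S hn1 hnN le_rfl hn1 hnN (Nat.sub_le _ 1) (Or.inr (by omega)))
  have hF : ω (c.F n) = 1 :=
    hone _ (fun y hy => (hZ y hy).ne_F hn1 le_rfl hnN)
      (c.hFS n n _ hn1 hnN hn1 hnN (Nat.sub_le _ 1))
  refine Cascade.coeff_deriv_succ_S_top k hn1 hnN (hprod _ _ hF hs)
    (coeff_deriv_V_eq_zero k hn1 hnN hL le_rfl
      (coeff_X_eq_zero_of_apply_ne_zero hsL1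
        (c.hSV n _ n _ hn1 hnN (Nat.sub_le _ 1) hn1 hnN hL le_rfl))
      (hprod _ _ hF hs)) (fun hN1 j hj => ?_) q
  rw [Finset.mem_Icc] at hj
  have hS' : ω (c.S (n + 1) (j - 1)) = 1 :=
    hone _ (fun y hy => (hZ y hy).ne_S hn1 (by omega) hN1 (by omega))
      (c.S_ne_S (by omega) hN1 (by omega) hn1 hnN (Nat.sub_le _ 1) (Or.inl (by omega)))
  have hact : c.act (n + 1 - 1) = c.S n (c.L n) := by
    rw [Nat.add_sub_cancel, act, if_neg (by omega)]
  refine ⟨hprod _ _ hs hS', coeff_deriv_U_eq_zero k (by omega) hN1 hj.1 hj.2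
    (coeff_X_eq_zero_of_apply_ne_zero hsL1
      (c.hSU n _ (n + 1) j hn1 hnN (Nat.sub_le _ 1) (by omega) hN1 hj.1 hj.2)) ?_⟩
  rw [hact]
  exact hprod _ _ hs hS'

theorem coeff_deriv_S_top [Fintype σ] (hω : c.IsSeparatingWeight k n Z ω) (hn1 : 1 ≤ n)
    (hnN : n ≤ c.N) (hZ : ∀ x ∈ Z, c.LowVar n x) {ℓ₀ : ℕ}
    (hmin : ∀ ℓ < ℓ₀, coeff (∑ x ∈ Z, single x 1) (c.deriv k ℓ (c.act (n - 1))) = 0) :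
    coeff (∑ x ∈ insert (c.S n (c.L n - 1)) Z, single x 1) (c.deriv k (ℓ₀ + 2) (c.S n (c.L n))) =
        k n (c.L n) 2 * k n (c.L n) 0 *
          coeff (∑ x ∈ Z, single x 1) (c.deriv k ℓ₀ (c.act (n - 1)))
      ∧ ∀ ℓ < ℓ₀ + 2, coeff (∑ x ∈ insert (c.S n (c.L n - 1)) Z, single x 1)
          (c.deriv k ℓ (c.S n (c.L n))) = 0 := by
  have hL := c.Lpos n hn1 hnN
  have hsL1 : (∑ x ∈ insert (c.S n (c.L n - 1)) Z, single x 1) (c.S n (c.L n - 1)) ≠ 0 := by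
    simp [sum_single_one_apply]
  obtain ⟨hβ, hβtop⟩ := linear_recurrence_eq_zero_of_forcing_eq_zero
    (β := fun q => coeff (∑ x ∈ insert (c.S n (c.L n - 1)) Z, single x 1)
      (c.deriv k q (c.U n (c.L n))))
    (coeff_X_eq_zero_of_apply_ne_zero hsL1
      (c.hSU n _ n _ hn1 hnN (Nat.sub_le _ 1) hn1 hnN hL le_rfl))
    (hω.coeff_deriv_succ_U_top hn1 hnN hZ) hmin
  have hα := hω.coeff_deriv_succ_S_top hn1 hnN hZ
  refine ⟨(hα (ℓ₀ + 1)).trans (by rw [hβtop, ← mul_assoc]), fun ℓ hℓ => ?_⟩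
  cases ℓ with
  | zero =>
    exact coeff_X_eq_zero_of_apply_ne_zero hsL1
      (c.S_ne_S hn1 hnN (Nat.sub_le _ 1) hn1 hnN le_rfl (Or.inr (by omega)))
  | succ q => rw [hα, hβ q (by omega), mul_zero]

end IsSeparatingWeight

variable [Fintype σ] [DecidableEq σ]

/-- **Lemma.** In the `N`-layer cascade, let `1 ≤ n ≤ N` and let `ℳ = ∏_j z j` be a
monomial appearing in `s_{n-1,L_{n-1}}^{(ℓ₀)}` (the variable `act (n-1)`) but in no
lower-order derivative, involving only variables of species among
`{S k j, F k : 1 ≤ k ≤ n-1} ∪ {E}`. Assume `ℳ` is square-free, does not contain two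
disjoint pairs of variables of species reacting together, and if `s_{n-1,L_{n-1}}`
divides `ℳ`, every reacting pair inside `ℳ` contains `s_{n-1,L_{n-1}}`. Then
`ℳ̂ = s_{n,L_n-1}·ℳ` appears in `s_{n,L_n}^{(ℓ₀+2)}` with coefficient
`c_{n,L_n}·a_{n,L_n}·C` (where `C` is the coefficient of `ℳ` in
`s_{n-1,L_{n-1}}^{(ℓ₀)}`) and in no lower-order derivative of `s_{n,L_n}`. -/
theorem monomial_lift_nonintermediate
    (c : Cascade σ) (k : ℕ → ℕ → Fin 6 → ℝ)
    (hk : ∀ m j, 1 ≤ m → m ≤ c.N → 1 ≤ j → j ≤ c.L m → ∀ t, 0 < k m j t)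
    (n : ℕ) (hn1 : 1 ≤ n) (hnN : n ≤ c.N)
    (M : ℕ) (z : Fin M → σ)
    (hvars : ∀ jj, z jj = c.E ∨ ∃ kk, 1 ≤ kk ∧ kk ≤ n - 1 ∧
      (z jj = c.F kk ∨ ∃ j', j' ≤ c.L kk ∧ z jj = c.S kk j'))
    (ℓ₀ : ℕ)
    (happ : MvPolynomial.coeff (∑ jj, Finsupp.single (z jj) 1)
      (c.deriv k ℓ₀ (c.act (n - 1))) ≠ 0)
    (hmin : ∀ ℓ < ℓ₀, MvPolynomial.coeff (∑ jj, Finsupp.single (z jj) 1)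
      (c.deriv k ℓ (c.act (n - 1))) = 0)
    (hsqfree : Function.Injective z)
    (hnopairs : ¬ ∃ j₁ j₂ j₃ j₄ : Fin M,
      j₁ ≠ j₂ ∧ j₁ ≠ j₃ ∧ j₁ ≠ j₄ ∧ j₂ ≠ j₃ ∧ j₂ ≠ j₄ ∧ j₃ ≠ j₄ ∧
      c.reactsWith (z j₁) (z j₂) ∧ c.reactsWith (z j₃) (z j₄))
    (hdvd : (∃ jj, z jj = c.act (n - 1)) → ∀ j₁ j₂ : Fin M,
      c.reactsWith (z j₁) (z j₂) → z j₁ = c.act (n - 1) ∨ z j₂ = c.act (n - 1)) :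
    MvPolynomial.coeff
        (Finsupp.single (c.S n (c.L n - 1)) 1 + ∑ jj, Finsupp.single (z jj) 1)
        (c.deriv k (ℓ₀ + 2) (c.S n (c.L n))) ≠ 0
    ∧ MvPolynomial.coeff
        (Finsupp.single (c.S n (c.L n - 1)) 1 + ∑ jj, Finsupp.single (z jj) 1)
        (c.deriv k (ℓ₀ + 2) (c.S n (c.L n)))
      = k n (c.L n) 2 * k n (c.L n) 0 *
          MvPolynomial.coeff (∑ jj, Finsupp.single (z jj) 1)
            (c.deriv k ℓ₀ (c.act (n - 1)))
    ∧ ∀ ℓ < ℓ₀ + 2,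
        MvPolynomial.coeff
          (Finsupp.single (c.S n (c.L n - 1)) 1 + ∑ jj, Finsupp.single (z jj) 1)
          (c.deriv k ℓ (c.S n (c.L n))) = 0 := by
  classical
  set Z := Finset.univ.image z
  have hZ : ∀ x ∈ Z, c.LowVar n x := by
    simpa [Z] using fun jj => show c.LowVar n (z jj) from hvars jj
  have hM : ∑ jj, single (z jj) 1 = ∑ x ∈ Z, single x 1 :=
    (Finset.sum_image (f := fun x => single x 1) fun _ _ _ _ h => hsqfree h).symm
  have hMhat : single (c.S n (c.L n - 1)) 1 + ∑ jj, single (z jj) 1 =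
      ∑ x ∈ insert (c.S n (c.L n - 1)) Z, single x 1 := by
    rw [Finset.sum_insert fun h => (hZ _ h).ne_S hn1 le_rfl hnN (Nat.sub_le _ 1) rfl, hM]
  rw [hMhat, hM]
  rw [hM] at happ hmin
  obtain ⟨ω, hω⟩ := c.exists_isSeparatingWeight k hn1 hnN hZ
    (edgesPairwiseMeet_image c.not_reactsWith_self hnopairs) (by simpa [Z] using hdvd)
  obtain ⟨hmain, hlower⟩ := hω.coeff_deriv_S_top hn1 hnN hZ hmin
  have hpos := hk n (c.L n) hn1 hnN (c.Lpos n hn1 hnN) le_rfl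
  exact ⟨hmain ▸ mul_ne_zero (mul_ne_zero (hpos 2).ne' (hpos 0).ne') happ, hmain, hlower⟩

end Cascade
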